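/- Assume in addition that ρ_B takes values in {0,1} (tuple-level partitioning). Then the variance of the sampling estimator satisfies Var[ρ_n] ≤ (1 − (1 − 1/n)^K) · ρ(1 − ρ). -/

import Mathlib

open MeasureTheory ProbabilityTheory Finset

noncomputable section

/-- `Λ`, the set of block-index tuples. -/
def Lam (K : ℕ) (m : Fin K → ℕ) : Type := ∀ k, Fin (m k)

instance (K : ℕ) (m : Fin K → ℕ) : Fintype (Lam K m) := by unfold Lam; infer_instance
instance (K : ℕ) (m : Fin K → ℕ) : DecidableEq (Lam K m) := by unfold Lam; infer_instance

/-- `Λ(S)`, block-index tuples restricted to the coordinates in `S`. -/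
def LamS (K : ℕ) (m : Fin K → ℕ) (S : Finset (Fin K)) : Type := ∀ k : S, Fin (m k)

instance (K : ℕ) (m : Fin K → ℕ) (S : Finset (Fin K)) : Fintype (LamS K m S) := by
  unfold LamS; infer_instance

/-- The mean `ρ = |Λ|⁻¹ Σ_{b∈Λ} ρ_B(b)`. -/
def lamMean (K : ℕ) (m : Fin K → ℕ) (ρB : Lam K m → ℝ) : ℝ :=
  (Fintype.card (Lam K m) : ℝ)⁻¹ * ∑ b, ρB b

open Classical in
/-- `ρ_S(l)`: the average of `ρ_B(b)` over all `b ∈ Λ` whose coordinates in `S` equal `l`. -/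
def rhoS (K : ℕ) (m : Fin K → ℕ) (ρB : Lam K m → ℝ) (S : Finset (Fin K))
    (l : LamS K m S) : ℝ :=
  ((Finset.univ.filter (fun b : Lam K m => ∀ k : S, b ↑k = l k)).card : ℝ)⁻¹ *
    ∑ b ∈ Finset.univ.filter (fun b : Lam K m => ∀ k : S, b ↑k = l k), ρB b

/-- `σ_S² = |Λ(S)|⁻¹ Σ_{l∈Λ(S)} (ρ_S(l) − ρ)²`. -/
def sigmaSq (K : ℕ) (m : Fin K → ℕ) (ρB : Lam K m → ℝ) (S : Finset (Fin K)) : ℝ :=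
  (Fintype.card (LamS K m S) : ℝ)⁻¹ *
    ∑ l : LamS K m S, (rhoS K m ρB S l - lamMean K m ρB) ^ 2

/-- The sample space `Ω = Π_{k=1}^{K} Π_{i=1}^{n} Fin m_k`. -/
def Samp (K n : ℕ) (m : Fin K → ℕ) : Type := ∀ k : Fin K, Fin n → Fin (m k)

instance (K n : ℕ) (m : Fin K → ℕ) : Fintype (Samp K n m) := by unfold Samp; infer_instance
instance (K n : ℕ) (m : Fin K → ℕ) : MeasurableSpace (Samp K n m) := ⊤

/-- The uniform probability measure on the sample space. -/
def unif (K n : ℕ) (m : Fin K → ℕ) : Measure (Samp K n m) :=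
  (Fintype.card (Samp K n m) : ENNReal)⁻¹ • Measure.count

/-- The sampling estimator `ρ_n`. -/
def est (K n : ℕ) (m : Fin K → ℕ) (ρB : Lam K m → ℝ) (ω : Samp K n m) : ℝ :=
  ((n : ℝ) ^ K)⁻¹ * ∑ i : Fin K → Fin n, ρB fun k => ω k (i k)


section aux
variable {α β : Type*} [Fintype α] [DecidableEq α] [Fintype β] [DecidableEq β]

def evalEquiv1 (x : α) (a : β) : {g : α → β // g x = a} ≃ ({y : α // y ≠ x} → β) where
  toFun g y := g.1 y
  invFun h := ⟨fun y => if hy : y = x then a else h ⟨y, hy⟩, by simp⟩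
  left_inv g := by
    ext y
    dsimp only
    split_ifs with hy
    · subst hy; exact g.2.symm
    · rfl
  right_inv h := by
    ext y
    dsimp only
    rw [dif_neg y.2]

lemma card_eval1 (x : α) (a : β) :
    Fintype.card {g : α → β // g x = a} = Fintype.card β ^ (Fintype.card α - 1) := by
  rw [Fintype.card_congr (evalEquiv1 x a), Fintype.card_fun, Fintype.card_subtype_compl,
    Fintype.card_subtype_eq]

def evalEquiv2 (x y : α) (a b : β) (hxy : x ≠ y) :
    {g : α → β // g x = a ∧ g y = b} ≃ ({z : α // z ≠ x ∧ z ≠ y} → β) where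
  toFun g z := g.1 z
  invFun h := ⟨fun z => if hz : z = x then a else if hz' : z = y then b else h ⟨z, hz, hz'⟩,
    by refine ⟨?_, ?_⟩ <;> simp [Ne.symm hxy]⟩
  left_inv g := by
    ext z
    dsimp only
    split_ifs with h1 h2
    · subst h1; exact g.2.1.symm
    · subst h2; exact g.2.2.symm
    · rfl
  right_inv h := by
    ext z
    dsimp only
    rw [dif_neg z.2.1, dif_neg z.2.2]

lemma card_ne2 {x y : α} (hxy : x ≠ y) :
    Fintype.card {z : α // z ≠ x ∧ z ≠ y} = Fintype.card α - 2 := by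
  rw [Fintype.card_subtype]
  have h : (univ.filter fun z : α => z ≠ x ∧ z ≠ y) = univ \ {x, y} := by
    ext z; simp [not_or]
  rw [h, card_sdiff_of_subset (subset_univ _), card_univ]
  congr 1
  rw [card_insert_of_notMem (by simp [hxy]), card_singleton]

lemma card_eval2 {x y : α} (hxy : x ≠ y) (a b : β) :
    Fintype.card {g : α → β // g x = a ∧ g y = b}
      = Fintype.card β ^ (Fintype.card α - 2) := by
  rw [Fintype.card_congr (evalEquiv2 x y a b hxy), Fintype.card_fun, card_ne2 hxy]

lemma card_pi_subtype {K : ℕ} {γ : Fin K → Type*} [∀ k, Fintype (γ k)]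
    (p : ∀ k, γ k → Prop) [∀ k, DecidablePred (p k)] :
    Fintype.card {f : ∀ k, γ k // ∀ k, p k (f k)} = ∏ k, Fintype.card {x : γ k // p k x} := by
  rw [Fintype.card_congr (Equiv.subtypePiEquivPi), Fintype.card_pi]

def diagEquiv (n : ℕ) : {r : Fin n × Fin n // r.1 = r.2} ≃ Fin n where
  toFun r := r.1.1
  invFun x := ⟨(x, x), rfl⟩
  left_inv := fun ⟨⟨a, b⟩, h⟩ => by cases h; rfl
  right_inv x := rfl

lemma card_diag (n : ℕ) : Fintype.card {r : Fin n × Fin n // r.1 ≠ r.2} = n * n - n := by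
  rw [Fintype.card_subtype_compl, Fintype.card_congr (diagEquiv n), Fintype.card_prod,
    Fintype.card_fin]

end aux

section samp
variable {K n : ℕ} {m : Fin K → ℕ}

instance (K n : ℕ) (m : Fin K → ℕ) : MeasurableSingletonClass (Samp K n m) :=
  ⟨fun _ => MeasurableSpace.measurableSet_top⟩

instance (K n : ℕ) (m : Fin K → ℕ) : DiscreteMeasurableSpace (Samp K n m) :=
  ⟨fun _ => MeasurableSpace.measurableSet_top⟩

open Classical in
lemma fiber1 (i : Fin K → Fin n) (a : Lam K m) :
    Fintype.card {ω : Samp K n m // (fun k => ω k (i k)) = a} = ∏ k, (m k) ^ (n - 1) := by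
  have e : {ω : Samp K n m // (fun k => ω k (i k)) = a}
      ≃ {ω : ∀ k, Fin n → Fin (m k) // ∀ k, ω k (i k) = a k} :=
    Equiv.subtypeEquivRight fun ω => funext_iff
  rw [Fintype.card_congr (e.trans (Equiv.subtypePiEquivPi
    (p := fun k (g : Fin n → Fin (m k)) => g (i k) = a k))), Fintype.card_pi]
  exact Finset.prod_congr rfl fun k _ => by
    rw [card_eval1, Fintype.card_fin, Fintype.card_fin]

lemma fiber2 {i j : Fin K → Fin n} (hij : ∀ k, i k ≠ j k) (a b : Lam K m) :
    Fintype.card {ω : Samp K n m //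
        ((fun k => ω k (i k), fun k => ω k (j k)) : Lam K m × Lam K m) = (a, b)}
      = ∏ k, (m k) ^ (n - 2) := by
  have e : {ω : Samp K n m //
        ((fun k => ω k (i k), fun k => ω k (j k)) : Lam K m × Lam K m) = (a, b)}
      ≃ {ω : ∀ k, Fin n → Fin (m k) // ∀ k, ω k (i k) = a k ∧ ω k (j k) = b k} :=
    Equiv.subtypeEquivRight fun ω => by
      constructor
      · rintro h k
        exact ⟨congrFun (congrArg Prod.fst h) k, congrFun (congrArg Prod.snd h) k⟩
      · intro h
        exact Prod.ext_iff.mpr ⟨funext fun k => (h k).1, funext fun k => (h k).2⟩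
  rw [Fintype.card_congr (e.trans (Equiv.subtypePiEquivPi
    (p := fun k (g : Fin n → Fin (m k)) => g (i k) = a k ∧ g (j k) = b k))), Fintype.card_pi]
  exact Finset.prod_congr rfl fun k _ => by
    rw [card_eval2 (hij k), Fintype.card_fin, Fintype.card_fin]

open Classical in
lemma sum1 (f : Lam K m → ℝ) (i : Fin K → Fin n) :
    ∑ ω : Samp K n m, f (fun k => ω k (i k))
      = (∏ k, ((m k : ℝ)) ^ (n - 1)) * ∑ b, f b := by
  calc ∑ ω : Samp K n m, f (fun k => ω k (i k))
      = ∑ b : Lam K m, ∑ _ω : {ω : Samp K n m // (fun k => ω k (i k)) = b}, f b := by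
        letI : DecidableEq ((k : Fin K) → Fin (m k)) := fun a b => Classical.propDecidable (a = b)
        exact (Fintype.sum_fiberwise' (fun ω : Samp K n m => (fun k => ω k (i k)) : _ → Lam K m) f).symm
    _ = ∑ b, (∏ k, ((m k : ℝ)) ^ (n - 1)) * f b := by
        refine Finset.sum_congr rfl fun b _ => ?_
        rw [Finset.sum_const, Finset.card_univ, fiber1, nsmul_eq_mul]
        push_cast
        ring
    _ = _ := by rw [← Finset.mul_sum]

lemma sum2 (f : Lam K m → ℝ) {i j : Fin K → Fin n} (hij : ∀ k, i k ≠ j k) :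
    ∑ ω : Samp K n m, f (fun k => ω k (i k)) * f (fun k => ω k (j k))
      = (∏ k, ((m k : ℝ)) ^ (n - 2)) * ((∑ b, f b) * (∑ b, f b)) := by
  calc ∑ ω : Samp K n m, f (fun k => ω k (i k)) * f (fun k => ω k (j k))
      = ∑ p : Lam K m × Lam K m, ∑ _ω : {ω : Samp K n m //
          ((fun k => ω k (i k), fun k => ω k (j k)) : Lam K m × Lam K m) = p},
          f p.1 * f p.2 :=
        (Fintype.sum_fiberwise'
          (fun ω : Samp K n m => ((fun k => ω k (i k), fun k => ω k (j k)) : Lam K m × Lam K m))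
          (fun p => f p.1 * f p.2)).symm
    _ = ∑ p : Lam K m × Lam K m, (∏ k, ((m k : ℝ)) ^ (n - 2)) * (f p.1 * f p.2) := by
        refine Finset.sum_congr rfl fun ⟨a, b⟩ _ => ?_
        rw [Finset.sum_const, Finset.card_univ, fiber2 hij, nsmul_eq_mul]
        push_cast
        ring
    _ = _ := by rw [← Finset.mul_sum, Fintype.sum_prod_type, ← Finset.sum_mul_sum]

lemma card_D (K n : ℕ) :
    (univ.filter fun p : (Fin K → Fin n) × (Fin K → Fin n) => ∀ k, p.1 k ≠ p.2 k).card
      = (n * n - n) ^ K := by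
  rw [← Fintype.card_subtype]
  have e1 : {p : (Fin K → Fin n) × (Fin K → Fin n) // ∀ k, p.1 k ≠ p.2 k}
      ≃ {q : Fin K → Fin n × Fin n // ∀ k, (q k).1 ≠ (q k).2} :=
    Equiv.subtypeEquiv (Equiv.arrowProdEquivProdArrow (Fin K) (fun _ => Fin n) (fun _ => Fin n)).symm
      fun p => Iff.rfl
  rw [Fintype.card_congr (e1.trans (Equiv.subtypePiEquivPi
    (p := fun _ (r : Fin n × Fin n) => r.1 ≠ r.2))), Fintype.card_pi]
  rw [Finset.prod_congr rfl fun (k : Fin K) _ => card_diag n, Finset.prod_const, card_univ,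
    Fintype.card_fin]

end samp
/-- under tuple-level partitioning (`ρ_B ∈ {0,1}`),
`Var[ρ_n] ≤ (1 − (1 − 1/n)^K) · ρ(1 − ρ)`. -/
theorem stmt3 (K n : ℕ) (hK : 1 ≤ K) (hn : 1 ≤ n) (m : Fin K → ℕ) (hm : ∀ k, 1 ≤ m k)
    (ρB : Lam K m → ℝ) (hbin : ∀ b, ρB b = 0 ∨ ρB b = 1) :
    variance (est K n m ρB) (unif K n m)
      ≤ (1 - (1 - (n : ℝ)⁻¹) ^ K) * (lamMean K m ρB * (1 - lamMean K m ρB)) := by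
  classical
  haveI : Nonempty (Samp K n m) := ⟨fun k _ => ⟨0, hm k⟩⟩
  have hN0 : (Fintype.card (Samp K n m) : ℝ) ≠ 0 := Nat.cast_ne_zero.2 Fintype.card_ne_zero
  haveI : IsProbabilityMeasure (unif K n m) := by
    constructor
    rw [unif, Measure.smul_apply, smul_eq_mul, Measure.count_univ, ENat.card_eq_coe_fintype_card, ENat.toENNReal_coe,
      ENNReal.inv_mul_cancel]
    · exact Nat.cast_ne_zero.2 Fintype.card_ne_zero
    · exact ENNReal.natCast_ne_top _
  have hint : ∀ f : Samp K n m → ℝ, ∫ ω, f ω ∂(unif K n m)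
      = (Fintype.card (Samp K n m) : ℝ)⁻¹ * ∑ ω, f ω := by
    intro f
    rw [MeasureTheory.integral_fintype .of_finite, Finset.mul_sum]
    refine Finset.sum_congr rfl fun ω _ => ?_
    simp only [Measure.real, unif, Measure.smul_apply, Measure.count_singleton, smul_eq_mul, mul_one,
      ENNReal.toReal_inv, ENNReal.toReal_natCast]
  set N : ℝ := (Fintype.card (Samp K n m) : ℝ) with hNdef
  set L : ℝ := (Fintype.card (Lam K m) : ℝ) with hLdef
  set T : ℝ := ∑ b, ρB b with hTdef
  set nR : ℝ := ((n : ℝ) ^ K) with hnRdef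
  set C1 : ℝ := ∏ k, ((m k : ℝ)) ^ (n - 1) with hC1def
  have hρ : lamMean K m ρB = L⁻¹ * T := rfl
  have hmpos : ∀ k, (0 : ℝ) < m k := fun k => by exact_mod_cast hm k
  have hLam : Fintype.card (Lam K m) = ∏ k, m k := by
    calc Fintype.card (Lam K m) = Fintype.card (∀ k, Fin (m k)) :=
          Fintype.card_eq.mpr ⟨Equiv.cast rfl⟩
      _ = ∏ k, m k := by simp
  have hSamp : Fintype.card (Samp K n m) = ∏ k, (m k) ^ n := by
    calc Fintype.card (Samp K n m) = Fintype.card (∀ k : Fin K, Fin n → Fin (m k)) :=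
          Fintype.card_eq.mpr ⟨Equiv.cast rfl⟩
      _ = ∏ k, (m k) ^ n := by simp [Fintype.card_fun]
  have hLpos : 0 < L := by
    rw [hLdef, hLam]
    push_cast
    exact Finset.prod_pos fun k _ => hmpos k
  have hnpos : (0 : ℝ) < n := by exact_mod_cast hn
  have hnR0 : nR ≠ 0 := pow_ne_zero _ hnpos.ne'
  have hC1L : C1 * L = N := by
    rw [hC1def, hLdef, hNdef, hLam, hSamp]
    push_cast
    rw [← Finset.prod_mul_distrib]
    exact Finset.prod_congr rfl fun k _ => by
      rw [← pow_succ, Nat.sub_add_cancel hn]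
  have hC1 : C1 = N / L := by rw [eq_div_iff hLpos.ne']; exact hC1L
  have hcardFn : (Fintype.card (Fin K → Fin n)) = n ^ K := by simp [Fintype.card_fun]
  -- mean
  have hEX : ∫ ω, est K n m ρB ω ∂(unif K n m) = lamMean K m ρB := by
    rw [hint]
    unfold est
    rw [← Finset.mul_sum, Finset.sum_comm]
    rw [Finset.sum_congr rfl fun i _ => sum1 ρB i]
    rw [Finset.sum_const, Finset.card_univ, hcardFn, nsmul_eq_mul, hρ]
    push_cast
    rw [← hC1L]
    have hC10 : C1 ≠ 0 := by
      rw [hC1def]; exact Finset.prod_ne_zero_iff.2 fun k _ => pow_ne_zero _ (hmpos k).ne'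
    field_simp [hnRdef]
    ring
  -- second moment
  set P : (Fin K → Fin n) × (Fin K → Fin n) → Prop := fun p => ∀ k, p.1 k ≠ p.2 k with hPdef
  set G : (Fin K → Fin n) × (Fin K → Fin n) → ℝ := fun p =>
    ∑ ω : Samp K n m, ρB (fun k => ω k (p.1 k)) * ρB (fun k => ω k (p.2 k)) with hGdef
  have expand : ∑ ω : Samp K n m, (est K n m ρB ^ 2) ω
      = (nR⁻¹ * nR⁻¹) * ∑ p : (Fin K → Fin n) × (Fin K → Fin n), G p := by
    calc ∑ ω : Samp K n m, (est K n m ρB ^ 2) ω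
        = ∑ ω : Samp K n m, (nR⁻¹ * nR⁻¹) * ∑ p : (Fin K → Fin n) × (Fin K → Fin n),
            ρB (fun k => ω k (p.1 k)) * ρB (fun k => ω k (p.2 k)) := by
          refine Finset.sum_congr rfl fun ω _ => ?_
          have hSS : (∑ i : Fin K → Fin n, ρB fun k => ω k (i k))
              * (∑ i : Fin K → Fin n, ρB fun k => ω k (i k))
              = ∑ p : (Fin K → Fin n) × (Fin K → Fin n),
                  ρB (fun k => ω k (p.1 k)) * ρB (fun k => ω k (p.2 k)) := by
            rw [Finset.sum_mul_sum, ← Finset.sum_product', Finset.univ_product_univ]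
          rw [Pi.pow_apply]
          unfold est
          rw [pow_two, mul_mul_mul_comm, hSS, hnRdef]
      _ = (nR⁻¹ * nR⁻¹) * ∑ ω : Samp K n m, ∑ p : (Fin K → Fin n) × (Fin K → Fin n),
            ρB (fun k => ω k (p.1 k)) * ρB (fun k => ω k (p.2 k)) := by
          rw [← Finset.mul_sum]
      _ = _ := by rw [Finset.sum_comm, hGdef]
  have h01 : ∀ b, 0 ≤ ρB b ∧ ρB b ≤ 1 := fun b => by rcases hbin b with h | h <;> simp [h]
  have hG2 : ∀ p : (Fin K → Fin n) × (Fin K → Fin n), G p ≤ C1 * T := by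
    intro p
    calc G p ≤ ∑ ω : Samp K n m, ρB (fun k => ω k (p.1 k)) :=
          Finset.sum_le_sum fun ω _ => mul_le_of_le_one_right (h01 _).1 (h01 _).2
      _ = C1 * T := sum1 ρB p.1
  have hG1 : ∀ p ∈ univ.filter P, G p = N / L ^ 2 * (T * T) := by
    intro p hp
    rw [Finset.mem_filter] at hp
    have hPp : ∀ k, p.1 k ≠ p.2 k := hp.2
    have hn2 : 2 ≤ n := by
      have hne := hPp ⟨0, hK⟩
      haveI : Nontrivial (Fin n) := ⟨_, _, hne⟩
      have := Fintype.one_lt_card (α := Fin n)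
      simp at this; omega
    have hC2L : (∏ k, ((m k : ℝ)) ^ (n - 2)) * L ^ 2 = N := by
      rw [hLdef, hNdef, hLam, hSamp]
      push_cast
      rw [← Finset.prod_pow, ← Finset.prod_mul_distrib]
      exact Finset.prod_congr rfl fun k _ => by
        rw [← pow_add, Nat.sub_add_cancel hn2]
    have hL20 : L ^ 2 ≠ 0 := pow_ne_zero _ hLpos.ne'
    rw [hGdef]
    dsimp only
    rw [sum2 ρB hPp, hTdef]
    rw [eq_comm, div_mul_eq_mul_div, div_eq_iff hL20, ← hC2L]
    ring
  have hcardP : (univ.filter P).card = (n * n - n) ^ K := card_D K n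
  have hcardsplit : (univ.filter P).card + (univ.filter fun p => ¬ P p).card
      = n ^ K * n ^ K := by
    rw [Finset.card_filter_add_card_filter_not, Finset.card_univ, Fintype.card_prod,
      hcardFn]
  have hsplit : ∑ p : (Fin K → Fin n) × (Fin K → Fin n), G p
      ≤ ((n * n - n) ^ K : ℕ) * (N / L ^ 2 * (T * T))
        + ((n ^ K * n ^ K - (n * n - n) ^ K : ℕ)) * (C1 * T) := by
    rw [← Finset.sum_filter_add_sum_filter_not univ P G]
    have h1 : ∑ p ∈ univ.filter P, G p = ((n * n - n) ^ K : ℕ) * (N / L ^ 2 * (T * T)) := by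
      rw [Finset.sum_congr rfl hG1, Finset.sum_const, hcardP, nsmul_eq_mul]
    have h2 : ∑ p ∈ univ.filter (fun p => ¬ P p), G p
        ≤ ((n ^ K * n ^ K - (n * n - n) ^ K : ℕ)) * (C1 * T) := by
      have := Finset.sum_le_card_nsmul (univ.filter fun p => ¬ P p) G (C1 * T)
        (fun p _ => hG2 p)
      rw [nsmul_eq_mul] at this
      refine le_trans this ?_
      have hcc : (univ.filter fun p => ¬ P p).card = n ^ K * n ^ K - (n * n - n) ^ K := by
        omega
      rw [hcc]
    linarith
  -- nonneg of T
  have hT0 : 0 ≤ T := Finset.sum_nonneg fun b _ => (h01 b).1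
  have hNpos : 0 < N := lt_of_le_of_ne (Nat.cast_nonneg _) (Ne.symm hN0)
  -- cast the counts
  have hnn : ((n * n - n : ℕ) : ℝ) = (n : ℝ) * n - n := by
    push_cast [Nat.cast_sub (Nat.le_mul_of_pos_left n (Nat.lt_of_lt_of_le Nat.zero_lt_one hn))]
    ring
  have hle1 : (n * n - n) ^ K ≤ n ^ K * n ^ K := by
    calc (n * n - n) ^ K ≤ (n * n) ^ K := Nat.pow_le_pow_left (Nat.sub_le _ _) K
      _ = n ^ K * n ^ K := by rw [mul_pow]
  have hcast2 : ((n ^ K * n ^ K - (n * n - n) ^ K : ℕ) : ℝ)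
      = (n : ℝ) ^ K * (n : ℝ) ^ K - ((n : ℝ) * n - n) ^ K := by
    push_cast [Nat.cast_sub hle1, hnn]
    rw [← hnn]
  have hdq : ((n : ℝ) * n - n) ^ K = (nR * nR) * (1 - (n : ℝ)⁻¹) ^ K := by
    have hbase : (n : ℝ) * n - n = ((n : ℝ) * (n : ℝ)) * (1 - (n : ℝ)⁻¹) := by
      field_simp
    rw [hbase, mul_pow, mul_pow, hnRdef]
  -- put it together
  rw [variance_eq_sub MemLp.of_discrete, hEX, hint]
  set q : ℝ := (1 - (n : ℝ)⁻¹) ^ K with hqdef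
  have hmono : N⁻¹ * ∑ ω, (est K n m ρB ^ 2) ω
      ≤ N⁻¹ * ((nR⁻¹ * nR⁻¹) * ((nR * nR * q) * (N / L ^ 2 * (T * T))
          + (nR * nR - nR * nR * q) * (C1 * T))) := by
    refine mul_le_mul_of_nonneg_left ?_ (inv_nonneg.2 hNpos.le)
    rw [expand]
    refine mul_le_mul_of_nonneg_left ?_ (by positivity)
    refine le_trans hsplit ?_
    have e1 : (((n * n - n) ^ K : ℕ) : ℝ) = nR * nR * q := by
      rw [Nat.cast_pow, hnn, hdq]
    rw [e1, hcast2, hdq, hnRdef]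
  have hfinal : N⁻¹ * ((nR⁻¹ * nR⁻¹) * ((nR * nR * q) * (N / L ^ 2 * (T * T))
        + (nR * nR - nR * nR * q) * (C1 * T))) - (lamMean K m ρB) ^ 2
      = (1 - q) * (lamMean K m ρB * (1 - lamMean K m ρB)) := by
    rw [hρ, hC1]
    field_simp
    ring
  have := hmono
  linarith [hfinal]

end
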